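/- (Discrete stability of Euler's method) Let f be K-Lipschitz in its second argument with K ≥ 0. Let y and z be two Euler iterations with step size h ≥ 0 starting from y_0 and z_0 = y_0 + ε respectively, i.e., y_{n+1} = y_n + h·f(t_n, y_n), z_{n+1} = z_n + h·f(t_n, z_n). Then for all n with n·h ≤ b - t_0, |z_n - y_n| ≤ exp((b - t_0)·K)·|ε|. -/

import Mathlib

/-!
Two Euler iterates for a `K`-Lipschitz right-hand side move apart by at most a factor `1 + hK`
per step. The discrete Grönwall inequality turns this into the factor `exp (n h K)` after `n`
steps, and `n h ≤ b - t₀` bounds it by `exp ((b - t₀) K)`.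
-/

open Real Finset

section EulerMethod

variable {E : Type*} [NormedAddCommGroup E] [NormedSpace ℝ E]

theorem norm_eulerStep_sub_le {g : E → E} {K h : ℝ} (hg : ∀ u v, ‖g u - g v‖ ≤ K * ‖u - v‖)
    (hh : 0 ≤ h) (u v : E) :
    ‖(u + h • g u) - (v + h • g v)‖ ≤ (1 + h * K) * ‖u - v‖ :=
  calc ‖(u + h • g u) - (v + h • g v)‖
      = ‖(u - v) + h • (g u - g v)‖ := by rw [smul_sub]; congr 1; abel
    _ ≤ ‖u - v‖ + h * ‖g u - g v‖ := by
        grw [norm_add_le, norm_smul, Real.norm_of_nonneg hh]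
    _ ≤ ‖u - v‖ + h * (K * ‖u - v‖) := by gcongr; exact hg u v
    _ = (1 + h * K) * ‖u - v‖ := by ring

theorem norm_euler_sub_le_mul_exp {f : ℝ → E → E} {K h : ℝ}
    (hf : ∀ t u v, ‖f t u - f t v‖ ≤ K * ‖u - v‖) (hK : 0 ≤ K) (hh : 0 ≤ h)
    {t : ℕ → ℝ} {y z : ℕ → E}
    (hy : ∀ n, y (n + 1) = y n + h • f (t n) (y n))
    (hz : ∀ n, z (n + 1) = z n + h • f (t n) (z n)) (n : ℕ) :
    ‖z n - y n‖ ≤ ‖z 0 - y 0‖ * exp (n * h * K) := by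
  have hstep (k : ℕ) : ‖z (k + 1) - y (k + 1)‖ ≤ (1 + h * K) * ‖z k - y k‖ + 0 := by
    rw [hy, hz, add_zero]
    exact norm_eulerStep_sub_le (hf _) hh _ _
  simpa [mul_assoc] using discrete_gronwall (u := fun k ↦ ‖z k - y k‖) (norm_nonneg _)
    (fun k _ ↦ hstep k) (fun _ _ ↦ by positivity) (fun _ _ ↦ le_rfl) (Nat.zero_le n)

end EulerMethod

theorem euler_discrete_stability_general
    (f : ℝ → ℝ → ℝ) (K h t0 b ε : ℝ)
    (hK : 0 ≤ K) (hh : 0 ≤ h)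
    (hf : ∀ t y1 y2 : ℝ, |f t y1 - f t y2| ≤ K * |y1 - y2|)
    (y z : ℕ → ℝ)
    (hz0 : z 0 = y 0 + ε)
    (hy : ∀ n, y (n + 1) = y n + h * f (t0 + n * h) (y n))
    (hz : ∀ n, z (n + 1) = z n + h * f (t0 + n * h) (z n)) :
    ∀ n : ℕ, (n : ℝ) * h ≤ b - t0 →
      |z n - y n| ≤ Real.exp ((b - t0) * K) * |ε| := by
  intro n hn
  have hdiff := norm_euler_sub_le_mul_exp (f := f) (by simpa only [Real.norm_eq_abs] using hf)
    hK hh (by simpa only [smul_eq_mul] using hy) (by simpa only [smul_eq_mul] using hz) n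
  calc |z n - y n| ≤ |ε| * exp (n * h * K) := by simpa [hz0] using hdiff
    _ ≤ exp ((b - t0) * K) * |ε| := by rw [mul_comm]; gcongr

theorem euler_discrete_stability
    (f : ℝ → ℝ → ℝ) (K h t0 b ε : ℝ)
    (hK : 0 ≤ K) (hh : 0 ≤ h) (htb : t0 ≤ b)
    (hf : ∀ t y1 y2 : ℝ, |f t y1 - f t y2| ≤ K * |y1 - y2|)
    (y z : ℕ → ℝ)
    (hz0 : z 0 = y 0 + ε)
    (hy : ∀ n, y (n + 1) = y n + h * f (t0 + n * h) (y n))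
    (hz : ∀ n, z (n + 1) = z n + h * f (t0 + n * h) (z n)) :
    ∀ n : ℕ, (n : ℝ) * h ≤ b - t0 →
      |z n - y n| ≤ Real.exp ((b - t0) * K) * |ε| :=
  euler_discrete_stability_general f K h t0 b ε hK hh hf y z hz0 hy hz
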